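/- arXiv:1511.04264 — 7 statements merged into one kernel-verified Lean document; each statement's English description precedes it below -/
import Mathlib

section
/- For every real x with 0 ≤ x < 1, the series ∑_{k=0}^∞ θ(k)·x^k converges and its sum equals 1 − (1 + 1/√(1−x))^{−2}. -/
/-- The critical offspring distribution: θ(k) = 3·(2k−1)!! / (2^{k+1}·(k+2)!),
with (2k−1)!! read as 1 when k = 0 (natural subtraction gives 0!! = 1). -/
noncomputable def theta (k : ℕ) : ℝ :=
  3 * (Nat.doubleFactorial (2 * k - 1) : ℝ) / (2 ^ (k + 1) * (Nat.factorial (k + 2) : ℝ))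

/-! θ(k) = 2 (-1)^k binom(3/2, k+2), so x² ∑ θ(k) xᵏ is twice the binomial series of (1 - x)^{3/2}
with its first two terms removed. Writing u = √(1 - x), the resulting value
(2u³ - 3u² + 1) / (1 - u²)² = (1 - u)²(1 + 2u) / ((1 - u)²(1 + u)²) equals 1 - u² / (1 + u)². -/

open scoped Nat

theorem Real.hasSum_choose_mul_pow (a : ℝ) {y : ℝ} (hy : |y| < 1) :
    HasSum (fun n ↦ Ring.choose a n * y ^ n) ((1 + y) ^ a) := by
  have h := Real.one_add_rpow_hasFPowerSeriesOnBall_zero (a := a) |>.hasSum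
    (y := y) (by rw [Metric.mem_eball, edist_zero_right, ← ofReal_norm]; simpa)
  simpa [binomialSeries, FormalMultilinearSeries.ofScalars, mul_comm] using h

theorem Ring.choose_succ_mul {R : Type*} [Field R] [CharZero R] (r : R) (n : ℕ) :
    Ring.choose r (n + 1) * (n + 1) = Ring.choose r n * (r - n) := by
  have h := Ring.choose_smul_choose r (Nat.le_succ n)
  simp only [Nat.choose_succ_self_right, Nat.succ_eq_add_one, Nat.add_sub_cancel_left,
    Ring.choose_one_right, nsmul_eq_mul] at h
  push_cast at h
  rw [← h, mul_comm]

theorem Nat.doubleFactorial_two_mul_add_one (k : ℕ) :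
    (2 * k + 1)‼ = (2 * k + 1) * (2 * k - 1)‼ := by
  cases k with
  | zero => rfl
  | succ k => rw [show 2 * (k + 1) - 1 = 2 * k + 1 by omega]; exact Nat.doubleFactorial_add_two _

theorem theta_succ_mul (k : ℕ) : theta (k + 1) * (2 * (k + 3)) = theta k * (2 * k + 1) := by
  simp only [theta, show 2 * (k + 1) - 1 = 2 * k + 1 by omega, Nat.doubleFactorial_two_mul_add_one,
    Nat.factorial_succ (k + 2)]
  push_cast
  field_simp
  ring

theorem theta_eq_choose (k : ℕ) : theta k = 2 * (-1) ^ k * Ring.choose (3 / 2 : ℝ) (k + 2) := by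
  induction k with
  | zero =>
    have h := Ring.choose_succ_mul (3 / 2 : ℝ) 1
    norm_num [theta, Ring.choose_one_right] at h ⊢
    linear_combination -h
  | succ k ih =>
    have h := Ring.choose_succ_mul (3 / 2 : ℝ) (k + 2)
    push_cast at h
    apply mul_right_cancel₀ (b := 2 * ((k : ℝ) + 3)) (by positivity)
    rw [theta_succ_mul, ih]
    linear_combination (-1) ^ k * 4 * h

theorem hasSum_theta_mul_pow_mul_sq {x : ℝ} (hx : |x| < 1) :
    HasSum (fun k ↦ theta k * x ^ k * x ^ 2) (2 * (1 - x) ^ (3 / 2 : ℝ) - 2 + 3 * x) := by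
  have h := Real.hasSum_choose_mul_pow (3 / 2) (y := -x) (by rwa [abs_neg])
  have h₂ := ((hasSum_nat_add_iff' 2).mpr h).mul_left 2
  have hval : 2 * ((1 + -x) ^ (3 / 2 : ℝ) -
      ∑ n ∈ Finset.range 2, Ring.choose (3 / 2 : ℝ) n * (-x) ^ n) =
      2 * (1 - x) ^ (3 / 2 : ℝ) - 2 + 3 * x := by
    simp only [Finset.sum_range_succ, Finset.sum_range_zero, Ring.choose_zero_right,
      Ring.choose_one_right, ← sub_eq_add_neg]
    ring
  rw [hval] at h₂
  exact h₂.congr_fun fun k ↦ by rw [theta_eq_choose, neg_pow, pow_add]; ring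

theorem one_sub_one_add_one_div_sqrt_zpow_eq {x : ℝ} (hx0 : 0 < x) (hx1 : x < 1) :
    1 - (1 + 1 / Real.sqrt (1 - x)) ^ (-2 : ℤ) = (2 * (1 - x) ^ (3 / 2 : ℝ) - 2 + 3 * x) / x ^ 2 := by
  set u := Real.sqrt (1 - x) with hu
  have hu₀ : 0 < u := Real.sqrt_pos.2 (by linarith)
  have hu₃ : (1 - x) ^ (3 / 2 : ℝ) = u ^ 3 := by
    rw [hu, Real.sqrt_eq_rpow, ← Real.rpow_natCast, ← Real.rpow_mul (by linarith)]
    norm_num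
  have hx : x = 1 - u ^ 2 := by rw [hu, Real.sq_sqrt (by linarith)]; ring
  have hx₀ : 1 - u ^ 2 ≠ 0 := hx ▸ hx0.ne'
  rw [hu₃, hx]
  field_simp
  ring

/-- For 0 ≤ x < 1, the series ∑ θ(k)·x^k converges with sum
1 − (1 + 1/√(1−x))^{−2}. -/
theorem theta_generating_function (x : ℝ) (hx0 : 0 ≤ x) (hx1 : x < 1) :
    HasSum (fun k : ℕ => theta k * x ^ k)
      (1 - (1 + 1 / Real.sqrt (1 - x)) ^ (-2 : ℤ)) := by
  rcases hx0.eq_or_lt with rfl | hpos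
  · convert hasSum_single (f := fun k ↦ theta k * 0 ^ k) 0 (fun k hk ↦ by simp [hk]) using 1
    norm_num [theta]
  have h := (hasSum_theta_mul_pow_mul_sq (abs_lt.2 ⟨by linarith, hx1⟩)).div_const (x ^ 2)
  rw [← one_sub_one_add_one_div_sqrt_zpow_eq hpos hx1] at h
  exact h.congr_fun fun k ↦ by field_simp
end

section
/- One has ∑_{k=0}^∞ θ(k) = 1 and ∑_{k=0}^∞ k·θ(k) = 1; that is, θ is a probability distribution on the nonnegative integers with mean 1. -/
noncomputable def dfr (n : ℕ) : ℝ := (Nat.doubleFactorial (2 * n - 1) : ℝ)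

lemma dfr_succ (n : ℕ) : dfr (n + 1) = (2 * n + 1) * dfr n := by
  cases n with
  | zero => simp [dfr, Nat.doubleFactorial]
  | succ m =>
    have h1 : 2 * (m + 1 + 1) - 1 = (2 * (m + 1) - 1) + 2 := by omega
    rw [dfr, dfr, h1, Nat.doubleFactorial]
    push_cast
    have : ((2 * (m+1) - 1 : ℕ) : ℝ) + 2 = 2 * (m+1) + 1 := by
      have : (2 * (m+1) - 1 : ℕ) = 2 * m + 1 := by omega
      rw [this]; push_cast; ring
    rw [this]

lemma dfr_pos (n : ℕ) : 0 < dfr n := by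
  unfold dfr; exact_mod_cast Nat.doubleFactorial_pos _

noncomputable def aa (n : ℕ) : ℝ := dfr n / (2 ^ n * (Nat.factorial (n + 1) : ℝ))
noncomputable def cc (n : ℕ) : ℝ := dfr n / (2 ^ n * (Nat.factorial n : ℝ))

lemma fact_pos (n : ℕ) : (0:ℝ) < (Nat.factorial n : ℝ) := by exact_mod_cast Nat.factorial_pos n

lemma theta_eq_sub (k : ℕ) : theta k = aa k - aa (k + 1) := by
  unfold theta aa
  rw [dfr_succ]
  have h2 : (Nat.factorial (k + 2) : ℝ) = (k + 2) * Nat.factorial (k + 1) := by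
    rw [Nat.factorial_succ]; push_cast; ring
  have hf1 := fact_pos (k + 1)
  have hf2 := fact_pos (k + 2)
  have hp : (0:ℝ) < 2 ^ k := by positivity
  rw [show dfr k = ((Nat.doubleFactorial (2 * k - 1) : ℕ) : ℝ) from rfl] at *
  field_simp
  rw [h2]; ring

lemma cc_succ (n : ℕ) : cc (n + 1) = cc n * (2 * n + 1) / (2 * (n + 1)) := by
  unfold cc
  rw [dfr_succ, Nat.factorial_succ]
  have hf := fact_pos n
  have hp : (0:ℝ) < 2 ^ n := by positivity
  field_simp
  push_cast
  ring

lemma aa_eq (n : ℕ) : aa n = cc n / (n + 1) := by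
  unfold aa cc
  rw [Nat.factorial_succ]
  have hf := fact_pos n
  have hp : (0:ℝ) < 2 ^ n := by positivity
  rw [div_div]
  congr 1
  push_cast
  ring

lemma cc_pos (n : ℕ) : 0 < cc n := by
  unfold cc
  have := dfr_pos n
  have := fact_pos n
  positivity

lemma cc_sq_le (n : ℕ) : (n + 1) * (cc n) ^ 2 ≤ 1 := by
  induction n with
  | zero => simp [cc, dfr, Nat.doubleFactorial, Nat.factorial]
  | succ m ih =>
    rw [cc_succ]
    have hc := cc_pos m
    have h : ((m:ℝ) + 1 + 1) * (cc m * (2 * m + 1) / (2 * (m + 1))) ^ 2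
        = ((m:ℝ)+1) * (cc m)^2 * ((m+2) * (2*m+1)^2 / ((m+1) * (2*(m+1))^2)) := by
      field_simp; ring
    push_cast
    rw [h]
    have hratio : ((m:ℝ)+2) * (2*m+1)^2 / ((m+1) * (2*(m+1))^2) ≤ 1 := by
      rw [div_le_one (by positivity)]
      nlinarith [sq_nonneg ((m:ℝ)+1)]
    have hnn : (0:ℝ) ≤ ((m:ℝ)+1) * (cc m)^2 := by positivity
    nlinarith

lemma cc_tendsto : Filter.Tendsto cc Filter.atTop (nhds 0) := by
  have hb : ∀ n : ℕ, cc n ≤ Real.sqrt (1 / (n + 1)) := by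
    intro n
    have h1 : (cc n) ^ 2 ≤ 1 / (n + 1) := by
      have := cc_sq_le n
      rw [le_div_iff₀ (by positivity)]
      nlinarith
    calc cc n = Real.sqrt ((cc n) ^ 2) := by
          rw [Real.sqrt_sq (cc_pos n).le]
      _ ≤ Real.sqrt (1 / (n + 1)) := Real.sqrt_le_sqrt h1
  have hlim : Filter.Tendsto (fun n : ℕ => Real.sqrt (1 / (n + 1))) Filter.atTop (nhds 0) := by
    have := (tendsto_one_div_add_atTop_nhds_zero_nat).sqrt
    simpa using this
  exact squeeze_zero (fun n => (cc_pos n).le) hb hlim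

lemma aa_tendsto : Filter.Tendsto aa Filter.atTop (nhds 0) := by
  refine squeeze_zero (fun n => ?_) (fun n => ?_) cc_tendsto
  · rw [aa_eq]; exact div_nonneg (cc_pos n).le (by positivity)
  · rw [aa_eq]
    rw [div_le_iff₀ (by positivity)]
    nlinarith [cc_pos n, (cc_pos n).le, sq_nonneg ((n:ℝ))]

lemma theta_nonneg (k : ℕ) : 0 ≤ theta k := by
  unfold theta
  positivity

lemma aa_zero : aa 0 = 1 := by simp [aa, dfr, Nat.doubleFactorial, Nat.factorial]
lemma cc_zero : cc 0 = 1 := by simp [cc, dfr, Nat.doubleFactorial, Nat.factorial]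

lemma mean_eq_sub (k : ℕ) :
    (k : ℝ) * theta k = (3 * cc k - 2 * aa k) - (3 * cc (k+1) - 2 * aa (k+1)) := by
  have h1 : theta k = aa k - aa (k + 1) := theta_eq_sub k
  have h2 : cc k - cc (k+1) = cc k * (1 / (2 * (k+1))) := by
    rw [cc_succ]; field_simp; ring
  have h3 : aa k = cc k / (k + 1) := aa_eq k
  have h4 : aa (k+1) = cc (k+1) / (k + 2) := by
    rw [aa_eq]; push_cast; ring_nf
  -- express everything in terms of cc k
  have h5 : cc (k+1) = cc k * (2 * k + 1) / (2 * (k + 1)) := cc_succ k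
  rw [h1, h3, h4, h5]
  field_simp
  ring

/-- θ is a probability distribution on ℕ with mean 1. -/
theorem theta_probability_mean_one :
    HasSum theta 1 ∧ HasSum (fun k : ℕ => (k : ℝ) * theta k) 1 := by
  constructor
  · rw [hasSum_iff_tendsto_nat_of_nonneg theta_nonneg]
    have heq : ∀ n : ℕ, ∑ i ∈ Finset.range n, theta i = 1 - aa n := by
      intro n
      calc ∑ i ∈ Finset.range n, theta i = ∑ i ∈ Finset.range n, (aa i - aa (i+1)) := by
            exact Finset.sum_congr rfl (fun i _ => theta_eq_sub i)
        _ = aa 0 - aa n := Finset.sum_range_sub' aa n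
        _ = 1 - aa n := by rw [aa_zero]
    simp_rw [heq]
    simpa using (tendsto_const_nhds.sub aa_tendsto)
  · rw [hasSum_iff_tendsto_nat_of_nonneg (fun k => mul_nonneg (Nat.cast_nonneg k) (theta_nonneg k))]
    have heq : ∀ n : ℕ, ∑ i ∈ Finset.range n, (i:ℝ) * theta i = 1 - (3 * cc n - 2 * aa n) := by
      intro n
      calc ∑ i ∈ Finset.range n, (i:ℝ) * theta i
          = ∑ i ∈ Finset.range n, ((3 * cc i - 2 * aa i) - (3 * cc (i+1) - 2 * aa (i+1))) := by
            exact Finset.sum_congr rfl (fun i _ => mean_eq_sub i)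
        _ = (3 * cc 0 - 2 * aa 0) - (3 * cc n - 2 * aa n) :=
            Finset.sum_range_sub' (fun m => 3 * cc m - 2 * aa m) n
        _ = 1 - (3 * cc n - 2 * aa n) := by rw [aa_zero, cc_zero]; ring
    simp_rw [heq]
    have : Filter.Tendsto (fun n => 3 * cc n - 2 * aa n) Filter.atTop (nhds 0) := by
      have := (cc_tendsto.const_mul 3).sub (aa_tendsto.const_mul 2)
      simpa using this
    simpa using (tendsto_const_nhds.sub this)
end

section
/- lim_{k→∞} k^{5/2}·θ(k) = 3/(2√π); in other words θ(k) is asymptotically equivalent to (3/(2√π))·k^{−5/2} as k → ∞. -/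
open Filter Topology Real Stirling Nat

theorem Nat.doubleFactorial_two_mul_sub_one_mul (k : ℕ) :
    (2 * k - 1)‼ * (2 ^ k * k !) = (2 * k)! := by
  cases k with
  | zero => rfl
  | succ k =>
    rw [← doubleFactorial_two_mul, show 2 * (k + 1) = 2 * k + 1 + 1 by ring,
      factorial_eq_mul_doubleFactorial, Nat.add_sub_cancel, mul_comm]

theorem Nat.centralBinom_mul_factorial_mul_factorial (k : ℕ) :
    centralBinom k * k ! * k ! = (2 * k)! := by
  rw [centralBinom_eq_two_mul_choose, two_mul, add_choose_mul_factorial_mul_factorial]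

theorem Nat.doubleFactorial_two_mul_sub_one_mul_two_pow (k : ℕ) :
    (2 * k - 1)‼ * 2 ^ k = centralBinom k * k ! := by
  apply Nat.eq_of_mul_eq_mul_right (factorial_pos k)
  rw [mul_assoc, doubleFactorial_two_mul_sub_one_mul, centralBinom_mul_factorial_mul_factorial]

theorem theta_eq_centralBinom (k : ℕ) :
    theta k = 3 / 2 * centralBinom k / (4 ^ k * ((k + 1) * (k + 2))) := by
  have h : ((2 * k - 1)‼ : ℝ) * 2 ^ k = centralBinom k * k ! := by
    exact_mod_cast doubleFactorial_two_mul_sub_one_mul_two_pow k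
  have hfac : ((k + 2)! : ℝ) = (k + 2) * ((k + 1) * k !) := by
    push_cast [factorial_succ]; ring
  have hdf : ((2 * k - 1)‼ : ℝ) = centralBinom k * k ! / 2 ^ k := by
    rw [← h]; field_simp
  rw [theta, hdf, hfac, pow_succ, show (4 : ℝ) ^ k = 2 ^ k * 2 ^ k by rw [← mul_pow]; norm_num]
  field_simp

theorem centralBinom_mul_sqrt_div_four_pow_eq {k : ℕ} (hk : k ≠ 0) :
    centralBinom k * √k / 4 ^ k = stirlingSeq (2 * k) / stirlingSeq k ^ 2 := by
  have h : ((2 * k)! : ℝ) = centralBinom k * k ! * k ! := by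
    exact_mod_cast (centralBinom_mul_factorial_mul_factorial k).symm
  have hk' : (0 : ℝ) < k := by positivity
  have hsqrt : √(2 * (2 * k : ℕ) : ℝ) = 2 * √k := by
    push_cast
    rw [show (2 : ℝ) * (2 * k) = 2 ^ 2 * k by ring, sqrt_mul (by norm_num), sqrt_sq (by norm_num)]
  have hpow : ((2 * k : ℕ) / exp 1 : ℝ) ^ (2 * k) = 4 ^ k * ((k / exp 1) ^ k) ^ 2 := by
    rw [show ((2 * k : ℕ) / exp 1 : ℝ) = 2 * (k / exp 1) by push_cast; ring, mul_pow, pow_mul,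
      pow_mul']
    norm_num
  rw [stirlingSeq, stirlingSeq, hsqrt, hpow, h, sqrt_mul' _ hk'.le]
  field_simp
  rw [sq_sqrt zero_le_two]

theorem tendsto_centralBinom_mul_sqrt_div_four_pow :
    Tendsto (fun k : ℕ => centralBinom k * √k / 4 ^ k) atTop (𝓝 (1 / √π)) := by
  have h2k : Tendsto (fun k : ℕ => stirlingSeq (2 * k)) atTop (𝓝 √π) :=
    tendsto_stirlingSeq_sqrt_pi.comp (tendsto_id.const_mul_atTop' two_pos)
  have hlim := h2k.div (tendsto_stirlingSeq_sqrt_pi.pow 2) (by positivity)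
  rw [show √π / √π ^ 2 = 1 / √π by field_simp] at hlim
  refine hlim.congr' ?_
  filter_upwards [eventually_ne_atTop 0] with k hk
  exact (centralBinom_mul_sqrt_div_four_pow_eq hk).symm

theorem natCast_rpow_five_halves_mul_theta (k : ℕ) :
    (k : ℝ) ^ (5 / 2 : ℝ) * theta k
      = 3 / 2 * (centralBinom k * √k / 4 ^ k) * (k / (k + 1) * (k / (k + 2))) := by
  have hrpow : (k : ℝ) ^ (5 / 2 : ℝ) = k ^ 2 * √k := by
    rw [sqrt_eq_rpow, ← rpow_natCast, ← rpow_add' (by positivity) (by norm_num)]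
    norm_num
  rw [hrpow, theta_eq_centralBinom]
  field_simp

/-- θ(k) ~ (3/(2√π))·k^{−5/2} as k → ∞, i.e. k^{5/2}·θ(k) → 3/(2√π). -/
theorem theta_asymptotics :
    Filter.Tendsto (fun k : ℕ => (k : ℝ) ^ (5 / 2 : ℝ) * theta k) Filter.atTop
      (nhds (3 / (2 * Real.sqrt Real.pi))) := by
  have hlim := (tendsto_centralBinom_mul_sqrt_div_four_pow.const_mul (3 / 2)).mul
    ((tendsto_natCast_div_add_atTop (1 : ℝ)).mul (tendsto_natCast_div_add_atTop (2 : ℝ)))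
  convert hlim using 2 with k
  · exact natCast_rpow_five_halves_mul_theta k
  · field_simp
end

section
/- For every real x ≥ 0, (2x/3 + 1)^{2x+3} ≤ (2x + 1)^{2x+1}; equivalently, for every real u ≥ 1, (u+2)·(log(u+2) − log 3) ≤ u·log u. -/
/-!
Since `(u + 2) / 3 = u / 3 + 2 / 3 · 1`, convexity of `t ↦ t log t` on `[0, ∞)` gives
`((u + 2) / 3) log ((u + 2) / 3) ≤ (1 / 3) u log u + (2 / 3) · 1 · log 1 = (u log u) / 3`.
Multiplying by 3 is the logarithmic form; exponentiating it with `u = 2x + 1` is the power form.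
-/

open Real

lemma mul_log_add_two_div_three_le {u : ℝ} (hu : 0 ≤ u) :
    (u + 2) * log ((u + 2) / 3) ≤ u * log u := by
  have h := convexOn_mul_log.2 (Set.mem_Ici.2 hu) (Set.mem_Ici.2 zero_le_one)
    (by norm_num : (0 : ℝ) ≤ 1 / 3) (by norm_num : (0 : ℝ) ≤ 2 / 3) (by norm_num)
  have hmean : (1 / 3 : ℝ) • u + (2 / 3 : ℝ) • (1 : ℝ) = (u + 2) / 3 := by
    simp only [smul_eq_mul]; ring
  rw [hmean] at h
  simp only [smul_eq_mul, log_one, mul_zero] at h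
  linarith

lemma add_two_div_three_rpow_le {u : ℝ} (hu : 0 < u) :
    ((u + 2) / 3) ^ (u + 2) ≤ u ^ u := by
  rw [rpow_def_of_pos (by positivity), rpow_def_of_pos hu, exp_le_exp, mul_comm, mul_comm (log u)]
  exact mul_log_add_two_div_three_le hu.le

/-- For every x ≥ 0, (2x/3 + 1)^{2x+3} ≤ (2x + 1)^{2x+1} (real exponents);
equivalently, for every u ≥ 1, (u+2)·(log(u+2) − log 3) ≤ u·log u. -/
theorem elementary_inequality :
    (∀ x : ℝ, 0 ≤ x →
      (2 * x / 3 + 1) ^ (2 * x + 3) ≤ (2 * x + 1) ^ (2 * x + 1)) ∧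
    (∀ u : ℝ, 1 ≤ u →
      (u + 2) * (Real.log (u + 2) - Real.log 3) ≤ u * Real.log u) := by
  constructor
  · intro x hx
    have h := add_two_div_three_rpow_le (u := 2 * x + 1) (by linarith)
    rwa [show (2 * x + 1 + 2) / 3 = 2 * x / 3 + 1 by ring,
      show 2 * x + 1 + 2 = 2 * x + 3 by ring] at h
  · intro u hu
    rw [← log_div (by linarith) three_ne_zero]
    exact mul_log_add_two_div_three_le (by linarith)
end

section
/- Let g : ℝ → ℝ be defined by g(x) = 1 − (1 + 1/√(1−x))^{−2}. Then g maps [0,1) into [0,1), and for every integer r ≥ 1 and every x ∈ [0,1), the r-fold iterate of g satisfies g^{[r]}(x) = 1 − (r + 1/√(1−x))^{−2}. -/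
private lemma g_step (g : ℝ → ℝ)
    (hg : ∀ x : ℝ, g x = 1 - (1 + 1 / Real.sqrt (1 - x)) ^ (-2 : ℤ))
    (c : ℝ) (hc : 1 ≤ c) :
    g (1 - c ^ (-2 : ℤ)) = 1 - (1 + c) ^ (-2 : ℤ) := by
  have hc0 : 0 < c := lt_of_lt_of_le one_pos hc
  have h1 : (1 : ℝ) - (1 - c ^ (-2 : ℤ)) = c ^ (-2 : ℤ) := by ring
  rw [hg, h1]
  have h2 : (c : ℝ) ^ (-2 : ℤ) = (c⁻¹) ^ 2 := by
    rw [zpow_neg, ← zpow_natCast, ← inv_zpow]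
    norm_num
  rw [h2, Real.sqrt_sq (by positivity)]
  rw [one_div, inv_inv]

private lemma sqrt_rep (x : ℝ) (hx : x ∈ Set.Ico (0 : ℝ) 1) :
    x = 1 - (1 / Real.sqrt (1 - x)) ^ (-2 : ℤ) ∧ 1 ≤ 1 / Real.sqrt (1 - x) := by
  obtain ⟨hx0, hx1⟩ := hx
  have h1 : 0 < 1 - x := by linarith
  have hs : 0 < Real.sqrt (1 - x) := Real.sqrt_pos.mpr h1
  constructor
  · have : (1 / Real.sqrt (1 - x)) ^ (-2 : ℤ) = Real.sqrt (1 - x) ^ 2 := by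
      rw [one_div, zpow_neg, ← zpow_natCast, ← inv_zpow, inv_inv]
      norm_num
    rw [this, Real.sq_sqrt (le_of_lt h1)]
    ring
  · have hle : Real.sqrt (1 - x) ≤ 1 := by
      calc Real.sqrt (1 - x) ≤ Real.sqrt 1 := Real.sqrt_le_sqrt (by linarith)
      _ = 1 := Real.sqrt_one
    rw [le_div_iff₀ hs]
    linarith

/-- Let g(x) = 1 − (1 + 1/√(1−x))^{−2}. Then g maps [0,1) into [0,1), and for every
r ≥ 1 and x ∈ [0,1), the r-fold iterate satisfies
g^[r](x) = 1 − (r + 1/√(1−x))^{−2}. -/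
theorem g_iterate_formula (g : ℝ → ℝ)
    (hg : ∀ x : ℝ, g x = 1 - (1 + 1 / Real.sqrt (1 - x)) ^ (-2 : ℤ)) :
    Set.MapsTo g (Set.Ico (0 : ℝ) 1) (Set.Ico (0 : ℝ) 1) ∧
    ∀ r : ℕ, 1 ≤ r → ∀ x ∈ Set.Ico (0 : ℝ) 1,
      g^[r] x = 1 - ((r : ℝ) + 1 / Real.sqrt (1 - x)) ^ (-2 : ℤ) := by
  have key : ∀ r : ℕ, 1 ≤ r → ∀ x ∈ Set.Ico (0 : ℝ) 1,
      g^[r] x = 1 - ((r : ℝ) + 1 / Real.sqrt (1 - x)) ^ (-2 : ℤ) := by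
    intro r
    induction r with
    | zero => intro h; omega
    | succ n ih =>
      intro _ x hx
      obtain ⟨hrep, hs1⟩ := sqrt_rep x hx
      rcases Nat.eq_zero_or_pos n with hn | hn
      · subst hn
        rw [show (0+1 : ℕ) = 1 from rfl, Function.iterate_one]
        have := g_step g hg (1 / Real.sqrt (1 - x)) hs1
        rw [← hrep] at this
        rw [this]
        norm_num
      · rw [Function.iterate_succ_apply', ih hn x hx]
        have hc : (1 : ℝ) ≤ (n : ℝ) + 1 / Real.sqrt (1 - x) := by
          have : (1 : ℝ) ≤ (n : ℝ) := by exact_mod_cast hn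
          linarith
        rw [g_step g hg _ hc]
        push_cast
        ring_nf
  constructor
  · intro x hx
    obtain ⟨_, hs1⟩ := sqrt_rep x hx
    rw [hg x]
    set c : ℝ := 1 + 1 / Real.sqrt (1 - x) with hcdef
    have hc2 : (2 : ℝ) ≤ c := by rw [hcdef]; linarith
    have hcpos : (0:ℝ) < c := by linarith
    have hcpow : (c : ℝ) ^ (-2 : ℤ) = 1 / c ^ 2 := by
      rw [zpow_neg, one_div, ← zpow_natCast]; norm_num
    constructor
    · rw [hcpow, sub_nonneg, div_le_one (by positivity)]
      nlinarith
    · rw [hcpow]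
      have : (0:ℝ) < 1 / c ^ 2 := by positivity
      linarith
  · exact key
end

section
/- Fix an integer r ≥ 1 and let a : ℕ → ℝ be a nonnegative sequence such that ∑_{k=0}^∞ a_k·x^k = 1 − (r + 1/√(1−x))^{−2} for every real x ∈ [0,1). Then lim_{k→∞} k^{5/2}·a_k = 3r/(2√π); in other words a_k is asymptotically equivalent to (3r/(2√π))·k^{−5/2} as k → ∞. -/
/-!
For `b = √(1 - x)`, partial fractions give
`(4r/π) ∫₀^∞ v⁴ / ((r²v² + 1)² (v² + b²)) dv = r⁻² - (r + 1/b)⁻²`,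
and expanding `1 / (v² + 1 - x) = ∑ₖ xᵏ / (1 + v²)ᵏ⁺¹` under the integral turns this into a
power series in `x`. By the identity theorem, for `k ≥ 1`,
`a k = (4r/π) ∫₀^∞ v⁴ / ((r²v² + 1)² (1 + v²)ᵏ⁺¹) dv`.
Substituting `v = w / √k` gives
`k^(5/2) a k = (4r/π) ∫₀^∞ w⁴ / ((r²w²/k + 1)² (1 + w²/k)ᵏ⁺¹) dw`, which tends by dominated
convergence to `(4r/π) ∫₀^∞ w⁴ e^(-w²) dw = (4r/π) · 3√π/8`.
-/

open Filter Real Set MeasureTheory Topology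
open scoped NNReal

theorem eq_of_hasSum_mul_pow {a c : ℕ → ℝ} {f : ℝ → ℝ} {ε : ℝ} (hε : 0 < ε)
    (ha : ∀ x ∈ Ioo 0 ε, HasSum (fun k => a k * x ^ k) (f x))
    (hc : ∀ x ∈ Ioo 0 ε, HasSum (fun k => c k * x ^ k) (f x)) : a = c := by
  set p := FormalMultilinearSeries.ofScalars ℝ (a - c)
  have hdiff : ∀ x ∈ Ioo 0 ε, HasSum (fun k => (a - c) k * x ^ k) 0 := fun x hx => by
    simpa [sub_mul] using (ha x hx).sub (hc x hx)
  have hhalf : ε / 2 ∈ Ioo 0 ε := ⟨by positivity, by linarith⟩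
  set ρ : ℝ≥0 := ⟨ε / 2, hhalf.1.le⟩
  have hrad : 0 < p.radius := by
    refine lt_of_lt_of_le (ENNReal.coe_pos.2 (show 0 < ρ from hhalf.1))
      (p.le_radius_of_tendsto (l := 0) ?_)
    have hρ : (ρ : ℝ) = ε / 2 := rfl
    simpa [p, FormalMultilinearSeries.ofScalars_norm, abs_mul, abs_of_pos hε, hρ]
      using (hdiff _ hhalf).summable.tendsto_atTop_zero.norm
  have hp : HasFPowerSeriesAt p.sum p 0 := (p.hasFPowerSeriesOnBall hrad).hasFPowerSeriesAt
  have hfreq : ∃ᶠ x in 𝓝[≠] (0 : ℝ), p.sum x = 0 := by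
    have hle : 𝓝[>] (0 : ℝ) ≤ 𝓝[≠] 0 := nhdsWithin_mono 0 fun _ hx => ne_of_gt hx
    refine (Eventually.frequently ?_).filter_mono hle
    filter_upwards [Ioo_mem_nhdsGT hε] with x hx
    rw [FormalMultilinearSeries.sum, ← (hdiff x hx).tsum_eq]
    exact tsum_congr fun k => by simp [p, mul_comm]
  have hzero := hp.eq_zero_of_eventually (hp.analyticAt.frequently_zero_iff_eventually_zero.1 hfreq)
  exact sub_eq_zero.1 ((FormalMultilinearSeries.ofScalars_series_eq_zero ℝ).1 hzero)

theorem hasSum_integral_of_nonneg {α : Type*} [MeasurableSpace α] {μ : Measure α}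
    {F : ℕ → α → ℝ} {f : α → ℝ} (hF_meas : ∀ n, AEStronglyMeasurable (F n) μ)
    (hF_nonneg : ∀ n, ∀ᵐ a ∂μ, 0 ≤ F n a) (hf : Integrable f μ)
    (hF_sum : ∀ᵐ a ∂μ, HasSum (fun n => F n a) (f a)) :
    HasSum (fun n => ∫ a, F n a ∂μ) (∫ a, f a ∂μ) := by
  refine hasSum_integral_of_dominated_convergence F hF_meas
    (fun n => (hF_nonneg n).mono fun a ha => (Real.norm_of_nonneg ha).le)
    (hF_sum.mono fun a ha => ha.summable) (hf.congr ?_) hF_sum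
  filter_upwards [hF_sum] with a ha using ha.tsum_eq.symm

theorem one_add_div_four_pow_three_le {k : ℕ} (hk : 2 ≤ k) {t : ℝ} (ht : 0 ≤ t) :
    (1 + t / 4) ^ 3 ≤ (1 + t / k) ^ (k + 1) := by
  set m := (k + 1) / 3
  have hk0 : (0 : ℝ) < k := by positivity
  have hkm : (k : ℝ) ≤ 4 * m := by exact_mod_cast (by omega : k ≤ 4 * m)
  have hlin : 1 + t / 4 ≤ 1 + m * (t / k) := by
    rw [mul_div_assoc', add_le_add_iff_left, div_le_div_iff₀ (by norm_num) hk0]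
    nlinarith
  calc (1 + t / 4) ^ 3 ≤ (1 + m * (t / k)) ^ 3 := by gcongr
    _ ≤ ((1 + t / k) ^ m) ^ 3 := by
      gcongr
      exact one_add_mul_le_pow (by linarith [div_nonneg ht hk0.le]) m
    _ = (1 + t / k) ^ (3 * m) := by rw [← pow_mul, mul_comm]
    _ ≤ (1 + t / k) ^ (k + 1) :=
      pow_le_pow_right₀ (le_add_of_nonneg_right (by positivity)) (by omega)

theorem tendsto_div_sq_add_one_atTop {R : ℝ} (hR : R ≠ 0) :
    Tendsto (fun v : ℝ => v / (R ^ 2 * v ^ 2 + 1)) atTop (𝓝 0) := by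
  have hden : Tendsto (fun v : ℝ => R ^ 2 * v + v⁻¹) atTop atTop :=
    (tendsto_id.const_mul_atTop (by positivity)).atTop_add tendsto_inv_atTop_zero
  refine (tendsto_inv_atTop_zero.comp hden).congr' ?_
  filter_upwards [eventually_gt_atTop 0] with v hv
  simp only [Function.comp_apply]
  field_simp

theorem integral_Ioi_pow_four_mul_exp_neg_sq :
    ∫ w in Ioi 0, w ^ 4 * exp (-w ^ 2) = 3 / 8 * √π := by
  have h := integral_rpow_mul_exp_neg_rpow (p := 2) (q := 4) (by norm_num) (by norm_num)
  have hΓ := Gamma_nat_add_half 2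
  norm_num at h hΓ
  rw [h, hΓ]
  ring

noncomputable def quarticPrimitive (R b v : ℝ) : ℝ :=
  b ^ 3 / (1 - R ^ 2 * b ^ 2) ^ 2 * arctan (v / b)
    + (1 - 3 * R ^ 2 * b ^ 2) / (2 * R ^ 3 * (1 - R ^ 2 * b ^ 2) ^ 2) * arctan (R * v)
    - 1 / (2 * R ^ 2 * (1 - R ^ 2 * b ^ 2)) * (v / (R ^ 2 * v ^ 2 + 1))

theorem tendsto_quarticPrimitive_atTop {R b : ℝ} (hR : 0 < R) (hb : 0 < b) :
    Tendsto (quarticPrimitive R b) atTop (𝓝 (b ^ 3 / (1 - R ^ 2 * b ^ 2) ^ 2 * (π / 2)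
      + (1 - 3 * R ^ 2 * b ^ 2) / (2 * R ^ 3 * (1 - R ^ 2 * b ^ 2) ^ 2) * (π / 2)
      - 1 / (2 * R ^ 2 * (1 - R ^ 2 * b ^ 2)) * 0)) := by
  have harctan := tendsto_nhds_of_tendsto_nhdsWithin tendsto_arctan_atTop
  exact (((harctan.comp (tendsto_id.atTop_div_const hb)).const_mul _).add
    ((harctan.comp (tendsto_id.const_mul_atTop hR)).const_mul _)).sub
    ((tendsto_div_sq_add_one_atTop hR.ne').const_mul _)

section QuarticIntegral

variable {R b : ℝ} (hR : 0 < R) (hb : 0 < b) (hRb : R * b ≠ 1)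
include hR hb hRb

theorem hasDerivAt_quarticPrimitive (v : ℝ) :
    HasDerivAt (quarticPrimitive R b)
      (v ^ 4 / ((R ^ 2 * v ^ 2 + 1) ^ 2 * (v ^ 2 + b ^ 2))) v := by
  have hD : 1 - R ^ 2 * b ^ 2 ≠ 0 := by
    have : 1 - R ^ 2 * b ^ 2 = (1 - R * b) * (1 + R * b) := by ring
    rw [this]
    exact mul_ne_zero (sub_ne_zero.2 hRb.symm) (by positivity)
  have h1 := ((hasDerivAt_id v).div_const b).arctan
  have h2 := ((hasDerivAt_id v).const_mul R).arctan
  have h3 := (hasDerivAt_id v).div (((hasDerivAt_pow 2 v).const_mul (R ^ 2)).add_const 1)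
    (by positivity : R ^ 2 * v ^ 2 + 1 ≠ 0)
  refine (((h1.const_mul (b ^ 3 / (1 - R ^ 2 * b ^ 2) ^ 2)).add
    (h2.const_mul ((1 - 3 * R ^ 2 * b ^ 2) / (2 * R ^ 3 * (1 - R ^ 2 * b ^ 2) ^ 2)))).sub
    (h3.const_mul (1 / (2 * R ^ 2 * (1 - R ^ 2 * b ^ 2))))).congr_deriv ?_
  simp only [id]
  -- with `D` atomic, `field_simp` can use `hD`
  set D := 1 - R ^ 2 * b ^ 2 with hD_def
  field_simp
  rw [hD_def]
  ring

theorem integrableOn_Ioi_quartic_div :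
    IntegrableOn (fun v => v ^ 4 / ((R ^ 2 * v ^ 2 + 1) ^ 2 * (v ^ 2 + b ^ 2))) (Ioi 0) :=
  integrableOn_Ioi_deriv_of_nonneg
    (hasDerivAt_quarticPrimitive hR hb hRb 0).continuousAt.continuousWithinAt
    (fun v _ => hasDerivAt_quarticPrimitive hR hb hRb v) (fun v _ => by positivity)
    (tendsto_quarticPrimitive_atTop hR hb)

theorem integral_Ioi_quartic_div :
    ∫ v in Ioi 0, v ^ 4 / ((R ^ 2 * v ^ 2 + 1) ^ 2 * (v ^ 2 + b ^ 2))
      = π * (1 + 2 * R * b) / (4 * R ^ 3 * (1 + R * b) ^ 2) := by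
  rw [integral_Ioi_of_hasDerivAt_of_nonneg
    (hasDerivAt_quarticPrimitive hR hb hRb 0).continuousAt.continuousWithinAt
    (fun v _ => hasDerivAt_quarticPrimitive hR hb hRb v) (fun v _ => by positivity)
    (tendsto_quarticPrimitive_atTop hR hb)]
  have hD : 1 - R ^ 2 * b ^ 2 = (1 - R * b) * (1 + R * b) := by ring
  have hRb' : 1 - R * b ≠ 0 := sub_ne_zero.2 hRb.symm
  simp only [quarticPrimitive, hD, zero_div, arctan_zero, mul_zero, sub_zero, add_zero]
  field_simp
  rw [div_eq_iff (pow_ne_zero 2 (by rwa [mul_comm]))]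
  ring

end QuarticIntegral

noncomputable def coeffKernel (R : ℝ) (k : ℕ) (v : ℝ) : ℝ :=
  v ^ 4 / ((R ^ 2 * v ^ 2 + 1) ^ 2 * (1 + v ^ 2) ^ (k + 1))

noncomputable def coeffSeq (R : ℝ) (k : ℕ) : ℝ :=
  4 * R / π * ∫ v in Ioi 0, coeffKernel R k v

theorem coeffKernel_nonneg (R : ℝ) (k : ℕ) (v : ℝ) : 0 ≤ coeffKernel R k v := by
  unfold coeffKernel; positivity

theorem continuous_coeffKernel (R : ℝ) (k : ℕ) : Continuous (coeffKernel R k) :=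
  Continuous.div (by fun_prop) (by fun_prop) fun v => by positivity

theorem hasSum_coeffKernel_mul_pow (R : ℝ) {x : ℝ} (hx0 : 0 ≤ x) (hx1 : x < 1) (v : ℝ) :
    HasSum (fun k => coeffKernel R k v * x ^ k)
      (v ^ 4 / ((R ^ 2 * v ^ 2 + 1) ^ 2 * (v ^ 2 + (1 - x)))) := by
  have hq : x / (1 + v ^ 2) < 1 := by rw [div_lt_one (by positivity)]; nlinarith
  have hterm : ∀ k : ℕ, v ^ 4 / ((R ^ 2 * v ^ 2 + 1) ^ 2 * (1 + v ^ 2)) * (x / (1 + v ^ 2)) ^ k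
      = coeffKernel R k v * x ^ k := fun k => by
    rw [coeffKernel, div_pow]
    field_simp
    ring
  have hsum : v ^ 4 / ((R ^ 2 * v ^ 2 + 1) ^ 2 * (1 + v ^ 2)) * (1 - x / (1 + v ^ 2))⁻¹
      = v ^ 4 / ((R ^ 2 * v ^ 2 + 1) ^ 2 * (v ^ 2 + (1 - x))) := by
    have : 1 + v ^ 2 - x ≠ 0 := by nlinarith
    rw [one_sub_div (by positivity), show v ^ 2 + (1 - x) = 1 + v ^ 2 - x by ring]
    field_simp
  have hgeo := (hasSum_geometric_of_lt_one (by positivity) hq).mul_left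
    (v ^ 4 / ((R ^ 2 * v ^ 2 + 1) ^ 2 * (1 + v ^ 2)))
  rwa [funext hterm, hsum] at hgeo

theorem hasSum_coeffSeq_mul_pow {R x : ℝ} (hR : 0 < R) (hx0 : 0 ≤ x) (hx1 : x < 1)
    (hRx : R * √(1 - x) ≠ 1) :
    HasSum (fun k => coeffSeq R k * x ^ k) ((R ^ 2)⁻¹ - (R + 1 / √(1 - x)) ^ (-2 : ℤ)) := by
  set b := √(1 - x)
  have hb : 0 < b := sqrt_pos.2 (by linarith)
  have hb2 : 1 - x = b ^ 2 := (sq_sqrt (by linarith)).symm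
  have hkernel : ∀ v, HasSum (fun k => coeffKernel R k v * x ^ k)
      (v ^ 4 / ((R ^ 2 * v ^ 2 + 1) ^ 2 * (v ^ 2 + b ^ 2))) := fun v => by
    simpa only [hb2] using hasSum_coeffKernel_mul_pow R hx0 hx1 v
  have hint := hasSum_integral_of_nonneg (μ := volume.restrict (Ioi 0))
    (F := fun k v => coeffKernel R k v * x ^ k)
    (fun k => ((continuous_coeffKernel R k).mul continuous_const).aestronglyMeasurable)
    (fun k => ae_of_all _ fun v => mul_nonneg (coeffKernel_nonneg R k v) (pow_nonneg hx0 k))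
    (integrableOn_Ioi_quartic_div hR hb hRx) (ae_of_all _ hkernel)
  simp only [integral_mul_const, integral_Ioi_quartic_div hR hb hRx] at hint
  have hseries : (fun k => coeffSeq R k * x ^ k)
      = fun k => 4 * R / π * ((∫ v in Ioi 0, coeffKernel R k v) * x ^ k) := by
    ext k
    rw [coeffSeq, mul_assoc]
  have hsum : (R ^ 2)⁻¹ - (R + 1 / b) ^ (-2 : ℤ)
      = 4 * R / π * (π * (1 + 2 * R * b) / (4 * R ^ 3 * (1 + R * b) ^ 2)) := by
    rw [zpow_neg, zpow_ofNat]
    field_simp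
    ring
  rw [hseries, hsum]
  exact hint.mul_left _

noncomputable def scaledKernel (R : ℝ) (k : ℕ) (w : ℝ) : ℝ :=
  w ^ 4 / ((R ^ 2 * w ^ 2 / k + 1) ^ 2 * (1 + w ^ 2 / k) ^ (k + 1))

theorem scaledKernel_eq {k : ℕ} (hk : k ≠ 0) (R w : ℝ) :
    scaledKernel R k w = k ^ 2 * coeffKernel R k ((√k)⁻¹ * w) := by
  have hk0 : (0 : ℝ) < k := by positivity
  have hsq : ((√k)⁻¹ * w) ^ 2 = w ^ 2 / k := by
    rw [mul_pow, inv_pow, sq_sqrt hk0.le, inv_mul_eq_div]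
  rw [scaledKernel, coeffKernel, show ((√k)⁻¹ * w) ^ 4 = (((√k)⁻¹ * w) ^ 2) ^ 2 by ring, hsq]
  field_simp

theorem rpow_mul_coeffSeq_eq {k : ℕ} (hk : k ≠ 0) (R : ℝ) :
    (k : ℝ) ^ (5 / 2 : ℝ) * coeffSeq R k = 4 * R / π * ∫ w in Ioi 0, scaledKernel R k w := by
  have hk0 : (0 : ℝ) < k := by positivity
  have hpow : (k : ℝ) ^ (5 / 2 : ℝ) = k ^ 2 * √k := by
    rw [sqrt_eq_rpow, ← rpow_natCast, ← rpow_add hk0]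
    norm_num
  have hsub := integral_comp_mul_left_Ioi' (coeffKernel R k) 0 (inv_pos.2 (sqrt_pos.2 hk0))
  rw [mul_zero, smul_eq_mul] at hsub
  simp only [coeffSeq, scaledKernel_eq hk, integral_const_mul, ← hsub, hpow]
  field_simp

theorem scaledKernel_le {k : ℕ} (hk : 2 ≤ k) (R w : ℝ) :
    scaledKernel R k w ≤ 64 * (1 + w ^ 2)⁻¹ := by
  have hden : (1 + w ^ 2 / 4) ^ 3 ≤ (R ^ 2 * w ^ 2 / k + 1) ^ 2 * (1 + w ^ 2 / k) ^ (k + 1) :=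
    (one_add_div_four_pow_three_le hk (sq_nonneg w)).trans
      (le_mul_of_one_le_left (by positivity)
        (one_le_pow₀ (le_add_of_nonneg_left (by positivity))))
  calc scaledKernel R k w ≤ w ^ 4 / (1 + w ^ 2 / 4) ^ 3 :=
        div_le_div_of_nonneg_left (by positivity) (by positivity) hden
    _ ≤ 64 * (1 + w ^ 2)⁻¹ := by
      rw [← div_eq_mul_inv, div_le_div_iff₀ (by positivity) (by positivity)]
      nlinarith [sq_nonneg w, pow_nonneg (sq_nonneg w) 3, pow_nonneg (sq_nonneg w) 2]

theorem tendsto_scaledKernel (R w : ℝ) :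
    Tendsto (fun k : ℕ => scaledKernel R k w) atTop (𝓝 (w ^ 4 * exp (-w ^ 2))) := by
  have hA : Tendsto (fun k : ℕ => (R ^ 2 * w ^ 2 / k + 1) ^ 2) atTop (𝓝 1) := by
    simpa using ((tendsto_const_div_atTop_nhds_zero_nat (R ^ 2 * w ^ 2)).add_const 1).pow 2
  have hB : Tendsto (fun k : ℕ => (1 + w ^ 2 / k) ^ (k + 1)) atTop (𝓝 (exp (w ^ 2))) := by
    have h1 : Tendsto (fun k : ℕ => 1 + w ^ 2 / k) atTop (𝓝 1) := by
      simpa using (tendsto_const_div_atTop_nhds_zero_nat (w ^ 2)).const_add 1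
    have hexp := (tendsto_one_add_div_pow_exp (w ^ 2)).mul h1
    rw [mul_one] at hexp
    exact hexp.congr fun k => (pow_succ _ k).symm
  have hlim := (tendsto_const_nhds (x := w ^ 4)).div (hA.mul hB) (by positivity)
  rw [one_mul] at hlim
  rw [exp_neg, ← div_eq_mul_inv]
  exact hlim

theorem tendsto_integral_scaledKernel (R : ℝ) :
    Tendsto (fun k : ℕ => ∫ w in Ioi 0, scaledKernel R k w) atTop (𝓝 (3 / 8 * √π)) := by
  rw [← integral_Ioi_pow_four_mul_exp_neg_sq]
  refine tendsto_integral_filter_of_dominated_convergence (fun w => 64 * (1 + w ^ 2)⁻¹)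
    (Eventually.of_forall fun k => ?_) ?_ (integrable_inv_one_add_sq.const_mul 64).integrableOn
    (ae_of_all _ (tendsto_scaledKernel R))
  · exact (Continuous.div (by fun_prop) (by fun_prop) fun w => by positivity)
      |>.aestronglyMeasurable
  · filter_upwards [eventually_ge_atTop 2] with k hk
    refine ae_of_all _ fun w => ?_
    rw [Real.norm_of_nonneg (by unfold scaledKernel; positivity)]
    exact scaledKernel_le hk R w

theorem tendsto_rpow_mul_coeffSeq (R : ℝ) :
    Tendsto (fun k : ℕ => (k : ℝ) ^ (5 / 2 : ℝ) * coeffSeq R k) atTop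
      (𝓝 (3 * R / (2 * √π))) := by
  have hval : 4 * R / π * (3 / 8 * √π) = 3 * R / (2 * √π) := by
    have hπ : √π ^ 2 = π := sq_sqrt pi_pos.le
    field_simp
    rw [hπ]
    ring
  rw [← hval]
  refine ((tendsto_integral_scaledKernel R).const_mul _).congr' ?_
  filter_upwards [eventually_ne_atTop 0] with k hk
  exact (rpow_mul_coeffSeq_eq hk R).symm

theorem natCast_mul_sqrt_one_sub_ne_one {r : ℕ} (hr : 1 ≤ r) {x : ℝ} (hx0 : 0 < x)
    (hx1 : x < 1 / 2) : (r : ℝ) * √(1 - x) ≠ 1 := by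
  intro h
  have hsq : (r : ℝ) ^ 2 * (1 - x) = 1 := by
    rw [← sq_sqrt (by linarith : (0 : ℝ) ≤ 1 - x), ← mul_pow, h, one_pow]
  rcases hr.eq_or_lt with rfl | hr2
  · norm_num at hsq
    linarith
  · have : (2 : ℝ) ≤ r := by exact_mod_cast hr2
    nlinarith

theorem coefficient_asymptotics_general (r : ℕ) (hr : 1 ≤ r) (a : ℕ → ℝ)
    (hsum : ∀ x : ℝ, 0 ≤ x → x < 1 →
      HasSum (fun k : ℕ => a k * x ^ k)
        (1 - ((r : ℝ) + 1 / Real.sqrt (1 - x)) ^ (-2 : ℤ))) :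
    Filter.Tendsto (fun k : ℕ => (k : ℝ) ^ (5 / 2 : ℝ) * a k) Filter.atTop
      (nhds (3 * r / (2 * Real.sqrt Real.pi))) := by
  have hR : (0 : ℝ) < r := by exact_mod_cast hr
  set C : ℝ := 1 - ((r : ℝ) ^ 2)⁻¹
  have hcoeff : a = fun k => coeffSeq r k + if k = 0 then C else 0 := by
    refine eq_of_hasSum_mul_pow (by norm_num : (0 : ℝ) < 1 / 2)
      (fun x hx => hsum x hx.1.le (by linarith [hx.2])) fun x hx => ?_
    have hc := (hasSum_coeffSeq_mul_pow hR hx.1.le (by linarith [hx.2])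
      (natCast_mul_sqrt_one_sub_ne_one hr hx.1 hx.2)).add (hasSum_ite_eq 0 C)
    convert hc using 1
    · ext k
      split_ifs with hk <;> simp [hk]
    · ring
  refine (tendsto_rpow_mul_coeffSeq r).congr' ?_
  filter_upwards [eventually_ne_atTop 0] with k hk
  simp [hcoeff, hk]

/-- If a nonnegative sequence (a_k) satisfies
∑ a_k·x^k = 1 − (r + 1/√(1−x))^{−2} for all x ∈ [0,1), with r ≥ 1 fixed, then
a_k ~ (3r/(2√π))·k^{−5/2} as k → ∞, i.e. k^{5/2}·a_k → 3r/(2√π). -/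
theorem coefficient_asymptotics (r : ℕ) (hr : 1 ≤ r) (a : ℕ → ℝ)
    (ha : ∀ k, 0 ≤ a k)
    (hsum : ∀ x : ℝ, 0 ≤ x → x < 1 →
      HasSum (fun k : ℕ => a k * x ^ k)
        (1 - ((r : ℝ) + 1 / Real.sqrt (1 - x)) ^ (-2 : ℤ))) :
    Filter.Tendsto (fun k : ℕ => (k : ℝ) ^ (5 / 2 : ℝ) * a k) Filter.atTop
      (nhds (3 * r / (2 * Real.sqrt Real.pi))) :=
  coefficient_asymptotics_general r hr a hsum
end

section
/- For every real λ > 0, lim_{r→∞} (r+1)²·( (r+1)^{−2} − (r + 1/√(1 − exp(−λ·(r+1)^{−2})))^{−2} ) = 1 − (1 + λ^{−1/2})^{−2}, where the limit is over integers r → ∞. -/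
open Filter Real Topology

/-! Writing `R = r + 1` and `S = R * √(1 - exp (-λ / R²))`, the expression equals
`1 - (1 - R⁻¹ + S⁻¹) ^ (-2)`. Since `1 - exp (-λ u) ~ λ u` as `u → 0`, `S → √λ`, and the limit
follows by continuity of `x ↦ x ^ (-2)` away from `0`. -/

theorem tendsto_one_sub_exp_neg_mul_div (c : ℝ) :
    Tendsto (fun u : ℝ => (1 - exp (-c * u)) / u) (𝓝[≠] 0) (𝓝 c) := by
  have hderiv : HasDerivAt (fun u : ℝ => 1 - exp (-c * u)) c 0 := by
    simpa using ((hasDerivAt_id (0 : ℝ)).const_mul (-c)).exp.const_sub 1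
  refine (hasDerivAt_iff_tendsto_slope.mp hderiv).congr fun u => ?_
  simp [slope_def_field]

theorem tendsto_sq_mul_one_sub_exp_neg (c : ℝ) :
    Tendsto (fun R : ℝ => R ^ 2 * (1 - exp (-c * R ^ (-2 : ℤ)))) atTop (𝓝 c) := by
  have hu : Tendsto (fun R : ℝ => R ^ (-2 : ℤ)) atTop (𝓝[≠] 0) :=
    tendsto_nhdsWithin_iff.mpr ⟨tendsto_zpow_atTop_zero (by norm_num),
      (eventually_gt_atTop 0).mono fun R hR => zpow_ne_zero _ hR.ne'⟩
  refine ((tendsto_one_sub_exp_neg_mul_div c).comp hu).congr' ?_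
  filter_upwards [eventually_gt_atTop 0] with R hR
  simp [zpow_neg, div_eq_mul_inv, mul_comm]

theorem tendsto_mul_sqrt_one_sub_exp_neg (c : ℝ) :
    Tendsto (fun R : ℝ => R * √(1 - exp (-c * R ^ (-2 : ℤ)))) atTop (𝓝 √c) := by
  refine ((continuous_sqrt.tendsto c).comp (tendsto_sq_mul_one_sub_exp_neg c)).congr' ?_
  filter_upwards [eventually_ge_atTop 0] with R hR
  simp [sqrt_mul (sq_nonneg R), sqrt_sq hR]

theorem sq_mul_zpow_neg_two_sub {R : ℝ} (hR : R ≠ 0) (a : ℝ) :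
    R ^ 2 * (R ^ (-2 : ℤ) - a ^ (-2 : ℤ)) = 1 - (a / R) ^ (-2 : ℤ) := by
  simp only [zpow_neg, zpow_ofNat, div_pow, inv_div]
  field_simp

theorem tendsto_laplace_transform_atTop {lam : ℝ} (hlam : 0 < lam) :
    Tendsto (fun R : ℝ => R ^ 2 * (R ^ (-2 : ℤ) -
      (R - 1 + 1 / √(1 - exp (-lam * R ^ (-2 : ℤ)))) ^ (-2 : ℤ)))
      atTop (𝓝 (1 - (1 + lam ^ (-(1 / 2) : ℝ)) ^ (-2 : ℤ))) := by
  have hS := (tendsto_mul_sqrt_one_sub_exp_neg lam).inv₀ (sqrt_pos.mpr hlam).ne'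
  have hratio : Tendsto (fun R : ℝ => 1 - R⁻¹ + (R * √(1 - exp (-lam * R ^ (-2 : ℤ))))⁻¹)
      atTop (𝓝 (1 + lam ^ (-(1 / 2) : ℝ))) := by
    rw [rpow_neg hlam.le, ← sqrt_eq_rpow]
    simpa using (tendsto_inv_atTop_zero.const_sub 1).add hS
  refine ((hratio.zpow₀ (-2) (Or.inl (by positivity))).const_sub 1).congr' ?_
  filter_upwards [eventually_gt_atTop 0] with R hR
  rw [sq_mul_zpow_neg_two_sub hR.ne']
  congr 2
  field_simp

/-- For every λ > 0,
(r+1)²·( (r+1)^{−2} − (r + 1/√(1 − exp(−λ·(r+1)^{−2})))^{−2} )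
→ 1 − (1 + λ^{−1/2})^{−2} as the integer r → ∞. -/
theorem laplace_transform_limit (lam : ℝ) (hlam : 0 < lam) :
    Filter.Tendsto
      (fun r : ℕ =>
        ((r : ℝ) + 1) ^ 2 *
          (((r : ℝ) + 1) ^ (-2 : ℤ) -
            ((r : ℝ) +
                1 / Real.sqrt (1 - Real.exp (-lam * ((r : ℝ) + 1) ^ (-2 : ℤ)))) ^ (-2 : ℤ)))
      Filter.atTop (nhds (1 - (1 + lam ^ (-(1 / 2) : ℝ)) ^ (-2 : ℤ))) := by
  have hR : Tendsto (fun r : ℕ => (r : ℝ) + 1) atTop atTop :=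
    tendsto_atTop_add_const_right _ 1 tendsto_natCast_atTop_atTop
  simpa only [Function.comp_def, add_sub_cancel_right] using
    (tendsto_laplace_transform_atTop hlam).comp hR
end
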